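/- arXiv:2506.21457 — 6 statements merged into one kernel-verified Lean document; each statement's English description precedes it below -/
import Mathlib

section
/- Fix α < 0 and define λ₀(x) = (W((|α||x|/2) e^{-|α||x|/2})/|x| + |α|/2)² for x ≠ 0 and λ₀(0) = α². Then α²/4 < λ₀(x) ≤ α² for all x ∈ ℝ, λ₀(0) = α², and λ₀(x) → α²/4 as |x| → ∞. -/
/-- Properties of the lowest eigenvalue `λ₀` of the two-delta Hamiltonian:
`α²/4 < λ₀(x) ≤ α²`, `λ₀(0) = α²`, and `λ₀(x) → α²/4` as `|x| → ∞`. -/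
theorem stmt_4 (W : ℝ → ℝ)
    (hW : ∀ y : ℝ, 0 ≤ y → W y * Real.exp (W y) = y)
    (hWpos : ∀ y : ℝ, 0 ≤ y → 0 ≤ W y)
    (α : ℝ) (hα : α < 0) (lam₀ : ℝ → ℝ)
    (hlam : ∀ x : ℝ, x ≠ 0 →
      lam₀ x = (W ((|α| * |x| / 2) * Real.exp (-(|α| * |x| / 2))) / |x| + |α| / 2) ^ 2)
    (hlam0 : lam₀ 0 = α ^ 2) :
    (∀ x : ℝ, α ^ 2 / 4 < lam₀ x ∧ lam₀ x ≤ α ^ 2) ∧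
    lam₀ 0 = α ^ 2 ∧
    Filter.Tendsto lam₀ (Filter.cocompact ℝ) (nhds (α ^ 2 / 4)) := by
  have ha : 0 < |α| := abs_pos.mpr (ne_of_lt hα)
  have hasq : |α| ^ 2 = α ^ 2 := sq_abs α
  -- key bounds for x ≠ 0
  have key : ∀ x : ℝ, x ≠ 0 →
      0 < W ((|α| * |x| / 2) * Real.exp (-(|α| * |x| / 2))) ∧
      W ((|α| * |x| / 2) * Real.exp (-(|α| * |x| / 2))) / |x|
        ≤ (|α| / 2) * Real.exp (-(|α| * |x| / 2)) := by
    intro x hx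
    have hxpos : 0 < |x| := abs_pos.mpr hx
    set t := |α| * |x| / 2 with ht
    have htpos : 0 < t := by positivity
    have hy : 0 ≤ t * Real.exp (-t) := by positivity
    have hw0 := hWpos _ hy
    have hwe := hW _ hy
    set w := W (t * Real.exp (-t)) with hwdef
    have hwpos : 0 < w := by
      rcases hw0.lt_or_eq with h | h
      · exact h
      · exfalso
        have hyy : 0 < t * Real.exp (-t) := by positivity
        rw [← h] at hwe
        simp at hwe
        nlinarith [Real.exp_pos (-t)]
    have hle : w ≤ t * Real.exp (-t) := by
      calc w = w * 1 := (mul_one w).symm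
        _ ≤ w * Real.exp w := by
            exact mul_le_mul_of_nonneg_left (Real.one_le_exp hw0) hw0
        _ = t * Real.exp (-t) := hwe
    refine ⟨hwpos, ?_⟩
    rw [div_le_iff₀ hxpos]
    calc w ≤ t * Real.exp (-t) := hle
      _ = |α| / 2 * Real.exp (-t) * |x| := by rw [ht]; ring
  have part1 : ∀ x : ℝ, α ^ 2 / 4 < lam₀ x ∧ lam₀ x ≤ α ^ 2 := by
    intro x
    rcases eq_or_ne x 0 with rfl | hx
    · rw [hlam0]
      constructor
      · nlinarith
      · exact le_refl _
    · obtain ⟨hwpos, hwle⟩ := key x hx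
      have hxpos : 0 < |x| := abs_pos.mpr hx
      rw [hlam x hx]
      set u := W ((|α| * |x| / 2) * Real.exp (-(|α| * |x| / 2))) / |x| with hu
      have hupos : 0 < u := div_pos hwpos hxpos
      have huub : u ≤ |α| / 2 := by
        have hexp : Real.exp (-(|α| * |x| / 2)) ≤ 1 := by
          apply Real.exp_le_one_iff.mpr
          nlinarith
        nlinarith
      constructor
      · nlinarith
      · nlinarith
  refine ⟨part1, hlam0, ?_⟩
  -- squeeze
  have hupper : Filter.Tendsto (fun x : ℝ =>
      ((|α| / 2) * Real.exp (-(|α| * |x| / 2)) + |α| / 2) ^ 2)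
      (Filter.cocompact ℝ) (nhds (α ^ 2 / 4)) := by
    have h1 : Filter.Tendsto (fun x : ℝ => |α| * |x| / 2) (Filter.cocompact ℝ)
        Filter.atTop := by
      have : Filter.Tendsto (fun x : ℝ => |x|) (Filter.cocompact ℝ) Filter.atTop :=
        tendsto_norm_cocompact_atTop
      exact (this.const_mul_atTop ha).atTop_div_const (by norm_num)
    have h2 : Filter.Tendsto (fun x : ℝ => Real.exp (-(|α| * |x| / 2)))
        (Filter.cocompact ℝ) (nhds 0) :=
      Real.tendsto_exp_neg_atTop_nhds_zero.comp h1
    have h3 := (((h2.const_mul (|α| / 2)).add_const (|α| / 2)).pow 2)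
    convert h3 using 2
    · nlinarith
  apply tendsto_of_tendsto_of_tendsto_of_le_of_le' tendsto_const_nhds hupper
  · exact Filter.Eventually.of_forall fun x => (part1 x).1.le
  · have hmem : {(0 : ℝ)}ᶜ ∈ Filter.cocompact ℝ :=
      (isCompact_singleton).compl_mem_cocompact
    filter_upwards [hmem] with x hx
    have hx0 : x ≠ 0 := by simpa using hx
    obtain ⟨hwpos, hwle⟩ := key x hx0
    rw [hlam x hx0]
    have h0 : (0:ℝ) ≤ W ((|α| * |x| / 2) * Real.exp (-(|α| * |x| / 2))) / |x| + |α| / 2 := by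
      positivity
    apply pow_le_pow_left₀ h0
    linarith
end

section
/- Fix α < 0 and let λ₀ be as above. The function V(x) := α² - λ₀(x) satisfies: V is even, 0 ≤ V(x) < (3/4)α² for all x, V(0) = 0, V(x) → (3/4)α² as |x| → ∞, and V is strictly increasing on (0,∞). -/
lemma aux_key (W : ℝ → ℝ)
    (hW : ∀ y : ℝ, 0 ≤ y → W y * Real.exp (W y) = y)
    (hWpos : ∀ y : ℝ, 0 ≤ y → 0 ≤ W y)
    (α : ℝ) (hα : α < 0) (x : ℝ) (hx : x ≠ 0) :
    ∃ u : ℝ, 0 < u ∧ u < 1 ∧ u ≤ Real.exp (-(|α| * |x| / 2)) ∧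
      u = Real.exp (-((|α| * |x| / 2) * (1 + u))) ∧
      (W ((|α| * |x| / 2) * Real.exp (-(|α| * |x| / 2))) / |x| + |α| / 2) ^ 2
        = (α ^ 2 / 4) * (1 + u) ^ 2 := by
  have ha : 0 < |α| := abs_pos.mpr (ne_of_lt hα)
  have hxabs : 0 < |x| := abs_pos.mpr hx
  set t : ℝ := |α| * |x| / 2 with ht
  have htpos : 0 < t := by positivity
  have hypos : 0 < t * Real.exp (-t) := by positivity
  set s : ℝ := W (t * Real.exp (-t)) with hs
  have hse : s * Real.exp s = t * Real.exp (-t) := hW _ hypos.le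
  have hs0 : 0 ≤ s := hWpos _ hypos.le
  have hspos : 0 < s := by
    rcases hs0.lt_or_eq with h | h
    · exact h
    · exfalso
      rw [← h] at hse
      simp at hse
      nlinarith [hypos]
  set u : ℝ := s / t with hu
  have hupos : 0 < u := by positivity
  have hst : s = u * t := by rw [hu, div_mul_cancel₀ s htpos.ne']
  have h1 : u * Real.exp (u * t) = Real.exp (-t) := by
    have h2 : (u * Real.exp (u * t)) * t = Real.exp (-t) * t := by
      rw [hst] at hse; nlinarith [hse]
    exact mul_right_cancel₀ htpos.ne' h2
  have hufix : u = Real.exp (-(t * (1 + u))) := by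
    have h3 : Real.exp (-(t * (1 + u))) = Real.exp (-t) * Real.exp (-(u * t)) := by
      rw [← Real.exp_add]; ring_nf
    rw [h3, ← h1, Real.exp_neg]
    field_simp
  have hult : u < 1 := by
    rw [hufix]
    apply Real.exp_lt_one_iff.mpr
    nlinarith [mul_pos htpos hupos]
  have hle : u ≤ Real.exp (-t) := by
    rw [hufix]
    apply Real.exp_le_exp.mpr
    nlinarith
  refine ⟨u, hupos, hult, hle, hufix, ?_⟩
  have hsx : s / |x| = u * (|α| / 2) := by
    rw [hst, ht]; field_simp
  rw [hsx, ← sq_abs α]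
  ring

/-- The effective potential `V(x) = α² - λ₀(x)` is even, satisfies
`0 ≤ V(x) < (3/4)α²`, `V(0) = 0`, `V(x) → (3/4)α²` as `|x| → ∞`,
and is strictly increasing on `(0,∞)`. -/
theorem stmt_5 (W : ℝ → ℝ)
    (hW : ∀ y : ℝ, 0 ≤ y → W y * Real.exp (W y) = y)
    (hWpos : ∀ y : ℝ, 0 ≤ y → 0 ≤ W y)
    (α : ℝ) (hα : α < 0) (lam₀ : ℝ → ℝ)
    (hlam : ∀ x : ℝ, x ≠ 0 →
      lam₀ x = (W ((|α| * |x| / 2) * Real.exp (-(|α| * |x| / 2))) / |x| + |α| / 2) ^ 2)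
    (hlam0 : lam₀ 0 = α ^ 2)
    (V : ℝ → ℝ) (hV : ∀ x : ℝ, V x = α ^ 2 - lam₀ x) :
    (∀ x : ℝ, V (-x) = V x) ∧
    (∀ x : ℝ, 0 ≤ V x ∧ V x < (3 / 4) * α ^ 2) ∧
    V 0 = 0 ∧
    Filter.Tendsto V (Filter.cocompact ℝ) (nhds ((3 / 4) * α ^ 2)) ∧
    StrictMonoOn V (Set.Ioi 0) := by
  have hα2 : 0 < α ^ 2 := by nlinarith
  -- For x ≠ 0, V x = α² - (α²/4)*(1+u)²
  have key : ∀ x : ℝ, x ≠ 0 → ∃ u : ℝ, 0 < u ∧ u < 1 ∧ u ≤ Real.exp (-(|α| * |x| / 2)) ∧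
      u = Real.exp (-((|α| * |x| / 2) * (1 + u))) ∧
      V x = α ^ 2 - (α ^ 2 / 4) * (1 + u) ^ 2 := by
    intro x hx
    obtain ⟨u, h1, h2, h3, h4, h5⟩ := aux_key W hW hWpos α hα x hx
    exact ⟨u, h1, h2, h3, h4, by rw [hV, hlam x hx, h5]⟩
  have hV0 : V 0 = 0 := by rw [hV, hlam0]; ring
  refine ⟨?_, ?_, hV0, ?_, ?_⟩
  · -- even
    intro x
    rcases eq_or_ne x 0 with rfl | hx
    · simp
    · rw [hV, hV, hlam x hx, hlam (-x) (neg_ne_zero.mpr hx), abs_neg]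
  · -- bounds
    intro x
    rcases eq_or_ne x 0 with rfl | hx
    · rw [hV0]; exact ⟨le_refl 0, by nlinarith⟩
    · obtain ⟨u, h1, h2, _, _, h5⟩ := key x hx
      have hA : 0 ≤ α ^ 2 * ((1 - u) * (3 + u)) :=
        mul_nonneg hα2.le (mul_nonneg (by linarith) (by linarith))
      have hB : 0 < α ^ 2 * u := mul_pos hα2 h1
      constructor
      · rw [h5]; nlinarith [hA]
      · rw [h5]; nlinarith [hB, mul_nonneg hα2.le (sq_nonneg u)]
  · -- tendsto
    have hbound : ∀ x : ℝ, dist (V x) ((3 / 4) * α ^ 2)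
        ≤ (3 / 4) * α ^ 2 * Real.exp (-(|α| / 2) * |x|) := by
      intro x
      rcases eq_or_ne x 0 with rfl | hx
      · simp [hV0, Real.dist_eq, abs_of_nonpos (by nlinarith : -((3:ℝ)/4*α^2) ≤ 0)]
      · obtain ⟨u, h1, h2, h3, _, h5⟩ := key x hx
        rw [Real.dist_eq, h5]
        have heq : -(|α| / 2) * |x| = -(|α| * |x| / 2) := by ring
        rw [heq]
        have habs : |α ^ 2 - α ^ 2 / 4 * (1 + u) ^ 2 - 3 / 4 * α ^ 2|
            = α ^ 2 / 4 * (2 * u + u ^ 2) := by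
          rw [abs_of_nonpos (by nlinarith [mul_pos hα2 h1, mul_nonneg hα2.le (sq_nonneg u)])]
          ring
        rw [habs]
        have hA : α ^ 2 * u ≤ α ^ 2 * Real.exp (-(|α| * |x| / 2)) :=
          mul_le_mul_of_nonneg_left h3 hα2.le
        have hB : α ^ 2 * u * u ≤ α ^ 2 * u * 1 :=
          mul_le_mul_of_nonneg_left h2.le (mul_pos hα2 h1).le
        nlinarith [hA, hB]
    rw [tendsto_iff_dist_tendsto_zero]
    apply squeeze_zero (fun x => dist_nonneg) hbound
    have h1 : Filter.Tendsto (fun x : ℝ => -(|α| / 2) * |x|) (Filter.cocompact ℝ)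
        Filter.atBot := by
      have h0 : Filter.Tendsto (fun x : ℝ => |x|) (Filter.cocompact ℝ) Filter.atTop := by
        exact (tendsto_norm_cocompact_atTop (E := ℝ)).congr (fun x => Real.norm_eq_abs x)
      have hc : -(|α| / 2) < 0 := by
        have : 0 < |α| := abs_pos.mpr (ne_of_lt hα)
        linarith
      exact Filter.Tendsto.const_mul_atTop_of_neg hc h0
    have h2 := (Real.tendsto_exp_atBot.comp h1).const_mul ((3:ℝ) / 4 * α ^ 2)
    simpa using h2
  · -- strict mono
    intro x₁ hx₁ x₂ hx₂ hlt
    simp only [Set.mem_Ioi] at hx₁ hx₂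
    obtain ⟨u₁, h11, h12, _, h14, h15⟩ := key x₁ (ne_of_gt hx₁)
    obtain ⟨u₂, h21, h22, _, h24, h25⟩ := key x₂ (ne_of_gt hx₂)
    have ha : 0 < |α| := abs_pos.mpr (ne_of_lt hα)
    rw [abs_of_pos hx₁] at h14
    rw [abs_of_pos hx₂] at h24
    have hu : u₂ < u₁ := by
      by_contra h
      push_neg at h
      have ht12 : |α| * x₁ / 2 < |α| * x₂ / 2 := by
        have := mul_lt_mul_of_pos_left hlt ha
        linarith
      have harg : -( (|α| * x₂ / 2) * (1 + u₂)) < -((|α| * x₁ / 2) * (1 + u₁)) := by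
        have hs1 : |α| * x₁ / 2 * (1 + u₁) < |α| * x₂ / 2 * (1 + u₁) :=
          mul_lt_mul_of_pos_right ht12 (by linarith)
        have hs2 : |α| * x₂ / 2 * (1 + u₁) ≤ |α| * x₂ / 2 * (1 + u₂) :=
          mul_le_mul_of_nonneg_left (by linarith) (by positivity)
        linarith
      have : u₂ < u₁ := by
        rw [h14, h24]
        exact Real.exp_lt_exp.mpr harg
      linarith
    rw [h15, h25]
    nlinarith [mul_pos (mul_pos hα2 (sub_pos.mpr hu)) (show (0:ℝ) < 2 + u₁ + u₂ by linarith)]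
end

section
/- For y → 0⁺ one has (W(y e^{-y}) + y)² - 4y² = -8y³ + O(y⁴); consequently, with α < 0 and V(x) = α² - λ₀(x) as above, V(x) = |α|³|x| + O(x²) as x → 0. -/
lemma exp_neg_quad_aux {s : ℝ} (hs : 0 ≤ s) : Real.exp (-s) - 1 + s ≤ s ^ 2 := by
  have h1 : 1 + s / 2 ≤ Real.exp (s / 2) := by
    have := Real.add_one_le_exp (s / 2); linarith
  have h2 : Real.exp (s / 2) ^ 2 = Real.exp s := by
    rw [sq, ← Real.exp_add]; ring_nf
  have h3 : (1 + s / 2) ^ 2 ≤ Real.exp s := by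
    rw [← h2]; nlinarith
  have hep : 0 < Real.exp s := Real.exp_pos s
  have hineq : 1 ≤ Real.exp s * (1 - s + s ^ 2) := by
    have hq : (1 : ℝ) ≤ (1 + s / 2) ^ 2 * (1 - s + s ^ 2) := by nlinarith
    have hnn : (0:ℝ) ≤ 1 - s + s ^ 2 := by nlinarith
    nlinarith
  have : Real.exp (-s) ≤ 1 - s + s ^ 2 := by
    rw [Real.exp_neg, inv_le_iff_one_le_mul₀ hep]
    linarith [hineq]
  linarith

/-- As `y → 0⁺`, `(W(y e^{-y}) + y)² - 4y² = -8y³ + O(y⁴)`; consequently,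
`V(x) = |α|³|x| + O(x²)` as `x → 0`. -/
theorem stmt_6 (W : ℝ → ℝ)
    (hW : ∀ y : ℝ, 0 ≤ y → W y * Real.exp (W y) = y)
    (hWpos : ∀ y : ℝ, 0 ≤ y → 0 ≤ W y)
    (α : ℝ) (hα : α < 0) (lam₀ : ℝ → ℝ)
    (hlam : ∀ x : ℝ, x ≠ 0 →
      lam₀ x = (W ((|α| * |x| / 2) * Real.exp (-(|α| * |x| / 2))) / |x| + |α| / 2) ^ 2)
    (hlam0 : lam₀ 0 = α ^ 2)
    (V : ℝ → ℝ) (hV : ∀ x : ℝ, V x = α ^ 2 - lam₀ x) :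
    (fun y : ℝ => (W (y * Real.exp (-y)) + y) ^ 2 - 4 * y ^ 2 - (-8) * y ^ 3)
      =O[nhdsWithin 0 (Set.Ioi 0)] (fun y : ℝ => y ^ 4) ∧
    (fun x : ℝ => V x - |α| ^ 3 * |x|) =O[nhds 0] (fun x : ℝ => x ^ 2) := by
  -- Key pointwise estimate, valid for all y ≥ 0
  have hE : ∀ y : ℝ, 0 ≤ y →
      0 ≤ (W (y * Real.exp (-y)) + y) ^ 2 - 4 * y ^ 2 + 8 * y ^ 3 ∧
      (W (y * Real.exp (-y)) + y) ^ 2 - 4 * y ^ 2 + 8 * y ^ 3 ≤ 28 * y ^ 4 := by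
    intro y hy
    set w := W (y * Real.exp (-y)) with hwdef
    have harg : 0 ≤ y * Real.exp (-y) := mul_nonneg hy (Real.exp_pos _).le
    have h0 : 0 ≤ w := hWpos _ harg
    have heq : w * Real.exp w = y * Real.exp (-y) := hW _ harg
    set s := y + w with hsdef
    have hweq : w = y * Real.exp (-s) := by
      have h1 : w * Real.exp w * Real.exp (-w) = y * Real.exp (-y) * Real.exp (-w) := by
        rw [heq]
      have h2 : Real.exp w * Real.exp (-w) = 1 := by rw [← Real.exp_add]; simp
      have h3 : Real.exp (-y) * Real.exp (-w) = Real.exp (-s) := by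
        rw [← Real.exp_add, hsdef]; ring_nf
      calc w = w * (Real.exp w * Real.exp (-w)) := by rw [h2]; ring
        _ = y * (Real.exp (-y) * Real.exp (-w)) := by rw [← mul_assoc, h1]; ring
        _ = y * Real.exp (-s) := by rw [h3]
    have hs : 0 ≤ s := add_nonneg hy h0
    have hes1 : 1 - s ≤ Real.exp (-s) := by
      have := Real.add_one_le_exp (-s); linarith
    have hes2 : Real.exp (-s) ≤ 1 - s + s ^ 2 := by
      have := exp_neg_quad_aux hs; linarith
    have hesle1 : Real.exp (-s) ≤ 1 := by
      calc Real.exp (-s) ≤ Real.exp 0 := Real.exp_le_exp.mpr (by linarith)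
        _ = 1 := Real.exp_zero
    have hwle : w ≤ y := by
      rw [hweq]; nlinarith [Real.exp_pos (-s)]
    have hsle : s ≤ 2 * y := by rw [hsdef]; linarith
    have h1 : 0 ≤ y - w := by linarith
    have h2 : y - w ≤ 2 * y ^ 2 := by nlinarith [hweq, hes1]
    have h3 : 0 ≤ w - y + 2 * y ^ 2 := by linarith
    have hid : w - y + 2 * y ^ 2 = y * (Real.exp (-s) - 1 + s) + y * (y - w) := by
      linear_combination hweq - y * hsdef
    have h4 : w - y + 2 * y ^ 2 ≤ 6 * y ^ 3 := by
      have hr1 : 0 ≤ Real.exp (-s) - 1 + s := by linarith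
      have hr2 : Real.exp (-s) - 1 + s ≤ s ^ 2 := by linarith
      have hsq : s ^ 2 ≤ 4 * y ^ 2 := by nlinarith
      have e1 : y * (Real.exp (-s) - 1 + s) ≤ y * (4 * y ^ 2) := by
        apply mul_le_mul_of_nonneg_left _ hy; linarith
      have e2 : y * (y - w) ≤ y * (2 * y ^ 2) := mul_le_mul_of_nonneg_left h2 hy
      nlinarith [hid]
    constructor
    · nlinarith [sq_nonneg (w - y)]
    · nlinarith [sq_nonneg (w - y), mul_le_mul_of_nonneg_left h2 h1]
  constructor
  · apply Asymptotics.IsBigO.of_bound 28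
    filter_upwards [self_mem_nhdsWithin] with y hy
    have h := hE y (le_of_lt hy)
    have e : (W (y * Real.exp (-y)) + y) ^ 2 - 4 * y ^ 2 - (-8) * y ^ 3
        = (W (y * Real.exp (-y)) + y) ^ 2 - 4 * y ^ 2 + 8 * y ^ 3 := by ring
    simp only [Real.norm_eq_abs, e]
    rw [abs_of_nonneg h.1, abs_of_nonneg (by positivity : (0:ℝ) ≤ y ^ 4)]
    exact h.2
  · apply Asymptotics.IsBigO.of_bound (7 * |α| ^ 4 / 4)
    apply Filter.Eventually.of_forall
    intro x
    by_cases hx : x = 0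
    · subst hx
      simp only [hV 0, hlam0, abs_zero, mul_zero, sub_self, sub_zero, norm_zero]
      positivity
    · have ha : 0 < |α| := abs_pos.mpr (ne_of_lt hα)
      have ht : 0 < |x| := abs_pos.mpr hx
      obtain ⟨hE1, hE2⟩ := hE (|α| * |x| / 2) (by positivity)
      have hlamx := hlam x hx
      obtain ⟨w, hwdef⟩ : ∃ w, W (|α| * |x| / 2 * Real.exp (-(|α| * |x| / 2))) = w := ⟨_, rfl⟩
      rw [hwdef] at hE1 hE2 hlamx
      obtain ⟨t, htdef⟩ : ∃ t, |x| = t := ⟨_, rfl⟩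
      obtain ⟨a, hadef⟩ : ∃ a, |α| = a := ⟨_, rfl⟩
      rw [htdef] at hE1 hE2 hlamx ht ⊢
      rw [hadef] at hE1 hE2 hlamx ha ⊢
      have htne : t ≠ 0 := ne_of_gt ht
      have hsq : α ^ 2 = a ^ 2 := by rw [← hadef, sq_abs]
      have hb : w / t + a / 2 = (w + a * t / 2) / t := by
        field_simp
      have hlamx' : lam₀ x = ((w + a * t / 2) / t) ^ 2 := by
        rw [hlamx, hb]
      have hVx : V x - a ^ 3 * t
          = -((w + a * t / 2) ^ 2 - 4 * (a * t / 2) ^ 2 + 8 * (a * t / 2) ^ 3) / t ^ 2 := by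
        rw [hV x, hlamx', hsq]; field_simp; ring
      have hx2 : |x ^ 2| = t ^ 2 := by
        rw [abs_of_nonneg (sq_nonneg x), ← sq_abs x, htdef]
      have ht2 : (0:ℝ) < t ^ 2 := by positivity
      rw [Real.norm_eq_abs, Real.norm_eq_abs, hVx, hx2]
      rw [abs_div, abs_neg, abs_of_nonneg hE1, abs_of_nonneg (le_of_lt ht2)]
      rw [div_le_iff₀ ht2]
      have h28 : 28 * (a * t / 2) ^ 4 = 7 * a ^ 4 / 4 * t ^ 2 * t ^ 2 := by ring
      linarith [hE2]
end

section
/- Fix λ > 0 and ε ∈ (0, 2]. The kernel K(ν,ν') = (2/π) · 1/((4+ε²)(ν² + ν'²) + 2(4-ε²)νν' + 4λ) satisfies ∫_{ℝ²} |K(ν,ν')|² dν dν' ≤ 1/(2ε²λ); hence the integral operator with kernel K is Hilbert–Schmidt on L²(ℝ) with Hilbert–Schmidt norm at most 1/√(2ε²λ). -/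
open MeasureTheory

/-- The kernel `K(ν,ν') = (2/π)/((4+ε²)(ν²+ν'²) + 2(4-ε²)νν' + 4λ)` satisfies
`∫_{ℝ²} |K|² ≤ 1/(2ε²λ)` for `λ > 0` and `0 < ε ≤ 2`. -/
theorem stmt_8 (lam ε : ℝ) (hlam : 0 < lam) (hε : 0 < ε) (hε2 : ε ≤ 2)
    (K : ℝ → ℝ → ℝ)
    (hK : ∀ ν ν' : ℝ, K ν ν' =
      (2 / Real.pi) * (1 / ((4 + ε ^ 2) * (ν ^ 2 + ν' ^ 2)
        + 2 * (4 - ε ^ 2) * ν * ν' + 4 * lam))) :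
    ∫⁻ p : ℝ × ℝ, ENNReal.ofReal (|K p.1 p.2| ^ 2) ≤
      ENNReal.ofReal (1 / (2 * ε ^ 2 * lam)) := by
  have hπ : (0:ℝ) < Real.pi := Real.pi_pos
  set a : ℝ := 2 * ε ^ 2 with ha_def
  set b : ℝ := 4 * lam with hb_def
  have ha : 0 < a := by positivity
  have hb : 0 < b := by positivity
  set f : ℝ → ℝ := fun x => (a * x ^ 2 + b)⁻¹ with hf_def
  have hden : ∀ x : ℝ, 0 < a * x ^ 2 + b := fun x => by positivity
  have hfnn : ∀ x, 0 ≤ f x := fun x => by simp only [hf_def]; positivity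
  -- pointwise bound
  have hpt : ∀ ν ν' : ℝ, |K ν ν'| ^ 2 ≤ 4 / Real.pi ^ 2 * (f ν * f ν') := by
    intro ν ν'
    set D : ℝ := (4 + ε ^ 2) * (ν ^ 2 + ν' ^ 2) + 2 * (4 - ε ^ 2) * ν * ν' + 4 * lam with hD_def
    have h4 : ε ^ 2 ≤ 4 := by nlinarith
    have hD : 0 < D := by
      have h1 : 0 ≤ (4 - ε ^ 2) * (ν + ν') ^ 2 := mul_nonneg (by linarith) (sq_nonneg _)
      nlinarith [sq_nonneg ν, sq_nonneg ν', sq_nonneg ε, sq_nonneg (ν - ν')]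
    have hKval : K ν ν' = 2 / Real.pi * (1 / D) := hK ν ν'
    have hKpos : 0 < K ν ν' := by rw [hKval]; positivity
    rw [abs_of_pos hKpos, hKval]
    have key : (a * ν ^ 2 + b) * (a * ν' ^ 2 + b) ≤ D ^ 2 := by
      have h1 : a * ν ^ 2 + a * ν' ^ 2 + b ≤ D := by
        have h0 : 0 ≤ (4 - ε ^ 2) * (ν + ν') ^ 2 := mul_nonneg (by linarith) (sq_nonneg _)
        simp only [hD_def, ha_def, hb_def]
        nlinarith
      nlinarith [mul_nonneg (mul_nonneg ha.le (sq_nonneg ν)) (mul_nonneg ha.le (sq_nonneg ν')),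
        mul_nonneg ha.le (sq_nonneg ν), mul_nonneg ha.le (sq_nonneg ν'), hb.le]
    have h2 : (1 : ℝ) / D ^ 2 ≤ f ν * f ν' := by
      simp only [hf_def]
      rw [← mul_inv, one_div]
      exact inv_anti₀ (by positivity) key
    calc (2 / Real.pi * (1 / D)) ^ 2 = 4 / Real.pi ^ 2 * (1 / D ^ 2) := by
          field_simp; ring
      _ ≤ 4 / Real.pi ^ 2 * (f ν * f ν') := by
          exact mul_le_mul_of_nonneg_left h2 (by positivity)
  have hfc : Continuous f := Continuous.inv₀ (by continuity) (fun x => (hden x).ne')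
  -- step 1 : bound the lintegral
  have step1 : ∫⁻ p : ℝ × ℝ, ENNReal.ofReal (|K p.1 p.2| ^ 2) ≤
      ∫⁻ p : ℝ × ℝ, ENNReal.ofReal (4 / Real.pi ^ 2) *
        (ENNReal.ofReal (f p.1) * ENNReal.ofReal (f p.2)) := by
    apply lintegral_mono
    intro p
    dsimp only
    rw [← ENNReal.ofReal_mul (by positivity), ← ENNReal.ofReal_mul (by positivity)]
    exact ENNReal.ofReal_le_ofReal (hpt p.1 p.2)
  have hmeas : AEMeasurable (fun x : ℝ => ENNReal.ofReal (f x)) volume :=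
    (ENNReal.measurable_ofReal.comp hfc.measurable).aemeasurable
  have step2 : ∫⁻ p : ℝ × ℝ, ENNReal.ofReal (4 / Real.pi ^ 2) *
        (ENNReal.ofReal (f p.1) * ENNReal.ofReal (f p.2)) =
      ENNReal.ofReal (4 / Real.pi ^ 2) *
        ((∫⁻ x : ℝ, ENNReal.ofReal (f x)) * (∫⁻ x : ℝ, ENNReal.ofReal (f x))) := by
    rw [lintegral_const_mul' _ _ ENNReal.ofReal_ne_top]
    congr 1
    rw [MeasureTheory.Measure.volume_eq_prod]
    exact lintegral_prod_mul hmeas hmeas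
  -- compute the one-dimensional integral
  set c : ℝ := Real.sqrt (a / b) with hc_def
  have hc : 0 < c := Real.sqrt_pos.2 (by positivity)
  have hfeq : ∀ x : ℝ, f x = b⁻¹ * (1 + (c * x) ^ 2)⁻¹ := by
    intro x
    have hc2 : c ^ 2 = a / b := Real.sq_sqrt (by positivity)
    show (a * x ^ 2 + b)⁻¹ = _
    rw [← mul_inv]
    congr 1
    rw [mul_pow, hc2]
    field_simp
    ring
  have hfeq' : f = fun x => b⁻¹ * (1 + (c * x) ^ 2)⁻¹ := funext hfeq
  have hint : Integrable f := by
    rw [hfeq']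
    exact (integrable_inv_one_add_sq.comp_mul_left' hc.ne').const_mul _
  have hsa : 0 < Real.sqrt a := Real.sqrt_pos.2 ha
  have hsb : 0 < Real.sqrt b := Real.sqrt_pos.2 hb
  have hbb : Real.sqrt b * Real.sqrt b = b := Real.mul_self_sqrt hb.le
  have hIval : ∫ x : ℝ, f x = Real.pi / Real.sqrt (a * b) := by
    rw [hfeq']
    simp only
    rw [MeasureTheory.integral_const_mul,
      show (fun x : ℝ => (1 + (c * x) ^ 2)⁻¹) =
        (fun x : ℝ => (fun y : ℝ => (1 + y ^ 2)⁻¹) (c * x)) from rfl,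
      MeasureTheory.Measure.integral_comp_mul_left (fun y : ℝ => (1 + y ^ 2)⁻¹) c,
      integral_univ_inv_one_add_sq, abs_of_pos (inv_pos.2 hc), smul_eq_mul,
      hc_def, Real.sqrt_div ha.le, Real.sqrt_mul ha.le]
    field_simp
    linear_combination hbb + hb_def
  have hlf : ∫⁻ x : ℝ, ENNReal.ofReal (f x) = ENNReal.ofReal (Real.pi / Real.sqrt (a * b)) := by
    rw [← ofReal_integral_eq_lintegral_ofReal hint (ae_of_all _ hfnn), hIval]
  -- final computation
  have hsab : Real.sqrt (a * b) * Real.sqrt (a * b) = a * b :=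
    Real.mul_self_sqrt (by positivity)
  have hfin : ENNReal.ofReal (4 / Real.pi ^ 2) *
      (ENNReal.ofReal (Real.pi / Real.sqrt (a * b)) *
        ENNReal.ofReal (Real.pi / Real.sqrt (a * b))) =
      ENNReal.ofReal (1 / (2 * ε ^ 2 * lam)) := by
    rw [← ENNReal.ofReal_mul (by positivity), ← ENNReal.ofReal_mul (by positivity)]
    congr 1
    rw [div_mul_div_comm, hsab]
    field_simp
    ring
  calc ∫⁻ p : ℝ × ℝ, ENNReal.ofReal (|K p.1 p.2| ^ 2) ≤ _ := step1
    _ = _ := step2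
    _ = ENNReal.ofReal (1 / (2 * ε ^ 2 * lam)) := by rw [hlf, hfin]
end

section
/- With ψ as in the previous statement (the normalized ground state of the two-delta Hamiltonian), one has ∫_ℝ |ψ'(y)|² dy = λ₀ · (1 + e^{-√λ₀|x|} - √λ₀|x| e^{-√λ₀|x|}) / (1 + e^{-√λ₀|x|} + √λ₀|x| e^{-√λ₀|x|}) ≤ λ₀, where ψ' denotes the (a.e.) derivative. -/
open Real MeasureTheory Set Filter intervalIntegral

lemma deriv_two_exp {ψ : ℝ → ℝ} {C₁ C₂ d₁ d₂ y : ℝ}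
    (h : ∀ᶠ z in nhds y, ψ z = C₁ * Real.exp (d₁ * z) + C₂ * Real.exp (d₂ * z)) :
    deriv ψ y = C₁ * d₁ * Real.exp (d₁ * y) + C₂ * d₂ * Real.exp (d₂ * y) := by
  have h₁ : HasDerivAt (fun z => C₁ * Real.exp (d₁ * z) + C₂ * Real.exp (d₂ * z))
      (C₁ * (Real.exp (d₁ * y) * (d₁ * 1)) + C₂ * (Real.exp (d₂ * y) * (d₂ * 1))) y :=
    ((((hasDerivAt_id y).const_mul d₁).exp).const_mul C₁).add
      ((((hasDerivAt_id y).const_mul d₂).exp).const_mul C₂)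
  have h₂ := h₁.congr_of_eventuallyEq h
  rw [h₂.deriv]; ring

lemma exp_sq' (u : ℝ) : Real.exp u ^ 2 = Real.exp (2 * u) := by
  rw [sq, ← Real.exp_add]; ring_nf

lemma integral_exp_Ioi' {k : ℝ} (hk : 0 < k) (a : ℝ) :
    ∫ y in Ioi a, Real.exp (-(k * y)) = Real.exp (-(k * a)) / k := by
  have := integral_comp_mul_left_Ioi (fun u => Real.exp (-u)) a hk
  simp only [smul_eq_mul] at this
  rw [this, integral_exp_neg_Ioi, div_eq_inv_mul]

lemma integrableOn_exp_Ioi' {k : ℝ} (hk : 0 < k) (a : ℝ) :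
    IntegrableOn (fun y : ℝ => Real.exp (-(k * y))) (Ioi a) := by
  simpa [neg_mul] using exp_neg_integrableOn_Ioi a hk

lemma ftc_mid {k : ℝ} (hk : 0 < k) (a : ℝ) :
    ∫ y in (0:ℝ)..a, (Real.exp (2 * k * y) + Real.exp (-(2 * k * y)) - 2)
      = (Real.exp (2 * k * a) - Real.exp (-(2 * k * a))) / (2 * k) - 2 * a := by
  have h2k : (2 * k) ≠ 0 := by positivity
  have hder : ∀ y ∈ uIcc (0:ℝ) a, HasDerivAt
      (fun z => Real.exp (2 * k * z) / (2 * k) + Real.exp (-(2 * k * z)) / (-(2 * k)) - 2 * z)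
      (Real.exp (2 * k * y) + Real.exp (-(2 * k * y)) - 2) y := by
    intro y _
    have h1 : HasDerivAt (fun z : ℝ => Real.exp (2 * k * z) / (2 * k))
        (Real.exp (2 * k * y) * (2 * k * 1) / (2 * k)) y :=
      (((hasDerivAt_id y).const_mul (2 * k)).exp).div_const _
    have h2 : HasDerivAt (fun z : ℝ => Real.exp (-(2 * k) * z) / (-(2 * k)))
        (Real.exp (-(2 * k) * y) * (-(2 * k) * 1) / (-(2 * k))) y :=
      (((hasDerivAt_id y).const_mul (-(2 * k))).exp).div_const _
    have h3 : HasDerivAt (fun z : ℝ => 2 * z) (2 * 1) y := (hasDerivAt_id y).const_mul 2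
    have h := (h1.add h2).sub h3
    simp only [neg_mul] at h
    exact h.congr_deriv (by field_simp)
  have hcont : Continuous fun y : ℝ => Real.exp (2 * k * y) + Real.exp (-(2 * k * y)) - 2 := by
    fun_prop
  rw [intervalIntegral.integral_eq_sub_of_hasDerivAt hder (hcont.intervalIntegrable _ _)]
  rw [mul_zero, neg_zero, Real.exp_zero]
  field_simp
  ring

/-- The derivative of the normalized ground state `ψ` satisfies
`∫ |ψ'|² = λ₀ (1 + e^{-t} - t e^{-t})/(1 + e^{-t} + t e^{-t}) ≤ λ₀`,
where `t = √λ₀ |x|`. -/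
theorem stmt_12 (lam x N : ℝ) (hlam : 0 < lam)
    (hN : N = Real.sqrt (Real.sqrt lam /
      (2 * (1 + Real.exp (-(Real.sqrt lam * |x|)) * (1 + Real.sqrt lam * |x|)))))
    (ψ : ℝ → ℝ)
    (hψ : ∀ y : ℝ, ψ y = N * (Real.exp (-(Real.sqrt lam * |x / 2 - y|))
      + Real.exp (-(Real.sqrt lam * |x / 2 + y|)))) :
    (∫ y : ℝ, (deriv ψ y) ^ 2) =
      lam * (1 + Real.exp (-(Real.sqrt lam * |x|))
              - Real.sqrt lam * |x| * Real.exp (-(Real.sqrt lam * |x|))) /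
            (1 + Real.exp (-(Real.sqrt lam * |x|))
              + Real.sqrt lam * |x| * Real.exp (-(Real.sqrt lam * |x|))) ∧
    (∫ y : ℝ, (deriv ψ y) ^ 2) ≤ lam := by
  set k := Real.sqrt lam with hk_def
  have hk : 0 < k := Real.sqrt_pos.mpr hlam
  set a := |x| / 2 with ha_def
  have ha : 0 ≤ a := by positivity
  have hxa : |x| = 2 * a := by rw [ha_def]; ring
  have hkx : k * |x| = 2 * k * a := by rw [hxa]; ring
  -- notation
  set E := Real.exp (-(2 * k * a)) with hE_def
  set Ep := Real.exp (2 * k * a) with hEp_def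
  have hEpos : 0 < E := Real.exp_pos _
  have hEEp : E * Ep = 1 := by rw [hE_def, hEp_def, ← Real.exp_add]; simp
  -- rewrite ψ with a
  have hψa : ∀ y : ℝ, ψ y = N * (Real.exp (-(k * |a - y|)) + Real.exp (-(k * |a + y|))) := by
    intro y
    rw [hψ y]
    rcases abs_cases x with ⟨h1, _⟩ | ⟨h1, h2⟩
    · rw [ha_def, h1]
    · have e1 : |a - y| = |x / 2 + y| := by
        rw [ha_def, h1, show -x / 2 - y = -(x / 2 + y) by ring, abs_neg]
      have e2 : |a + y| = |x / 2 - y| := by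
        rw [ha_def, h1, show -x / 2 + y = -(x / 2 - y) by ring, abs_neg]
      rw [e1, e2, add_comm]
  -- N² value
  have hQpos : 0 < 1 + E + 2 * k * a * E := by positivity
  have hN2 : N ^ 2 = k / (2 * (1 + E + 2 * k * a * E)) := by
    rw [hN, hkx]
    rw [Real.sq_sqrt (by positivity)]
    rw [← hE_def]
    ring
  -- evenness
  have hψeven : (fun z => ψ (-z)) = ψ := by
    funext z
    rw [hψa z, hψa (-z)]
    rw [show a - -z = a + z by ring, show a + -z = a - z by ring, add_comm]
  have heven : ∀ y : ℝ, (deriv ψ (-y)) ^ 2 = (deriv ψ y) ^ 2 := by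
    intro y
    have := deriv_comp_neg (f := ψ) (x := y)
    rw [hψeven] at this
    rw [this]; ring
  -- derivative on the middle region
  have hsq_mid : ∀ y ∈ Ioo (-a) a, (deriv ψ y) ^ 2
      = (N * k) ^ 2 * E * (Real.exp (2 * k * y) + Real.exp (-(2 * k * y)) - 2) := by
    intro y hy
    have hev : ∀ᶠ z in nhds y, ψ z = (N * Real.exp (-(k * a))) * Real.exp (k * z)
        + (N * Real.exp (-(k * a))) * Real.exp ((-k) * z) := by
      filter_upwards [isOpen_Ioo.mem_nhds hy] with z hz
      rw [hψa z, abs_of_pos (by linarith [hz.2] : (0:ℝ) < a - z),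
        abs_of_pos (by linarith [hz.1] : (0:ℝ) < a + z)]
      rw [show -(k * (a - z)) = -(k * a) + k * z by ring,
        show -(k * (a + z)) = -(k * a) + (-k) * z by ring, Real.exp_add, Real.exp_add]
      ring
    rw [deriv_two_exp hev]
    rw [show ((N * Real.exp (-(k * a))) * k * Real.exp (k * y)
        + (N * Real.exp (-(k * a))) * (-k) * Real.exp ((-k) * y)) ^ 2
      = (N * k) ^ 2 * Real.exp (-(k * a)) ^ 2 * (Real.exp (k * y) ^ 2
        + Real.exp ((-k) * y) ^ 2 - 2 * (Real.exp (k * y) * Real.exp ((-k) * y))) by ring]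
    rw [exp_sq', exp_sq', exp_sq', ← Real.exp_add]
    rw [show 2 * (k * y) = 2 * k * y by ring, show 2 * ((-k) * y) = -(2 * k * y) by ring,
      show k * y + (-k) * y = 0 by ring, show 2 * -(k * a) = -(2 * k * a) by ring, Real.exp_zero]
    rw [← hE_def]; ring
  -- derivative on the right region
  have hsq_right : ∀ y ∈ Ioi a, (deriv ψ y) ^ 2
      = (N * k) ^ 2 * (Ep + 2 + E) * Real.exp (-(2 * k * y)) := by
    intro y hy
    have hev : ∀ᶠ z in nhds y, ψ z = (N * Real.exp (k * a)) * Real.exp ((-k) * z)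
        + (N * Real.exp (-(k * a))) * Real.exp ((-k) * z) := by
      filter_upwards [isOpen_Ioi.mem_nhds hy] with z hz
      have hz' : a < z := hz
      rw [hψa z, abs_of_neg (by linarith : a - z < 0),
        abs_of_pos (by linarith : (0:ℝ) < a + z)]
      rw [show -(k * -(a - z)) = k * a + (-k) * z by ring,
        show -(k * (a + z)) = -(k * a) + (-k) * z by ring, Real.exp_add, Real.exp_add]
      ring
    rw [deriv_two_exp hev]
    rw [show ((N * Real.exp (k * a)) * (-k) * Real.exp ((-k) * y)
        + (N * Real.exp (-(k * a))) * (-k) * Real.exp ((-k) * y)) ^ 2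
      = (N * k) ^ 2 * (Real.exp (k * a) ^ 2 + 2 * (Real.exp (k * a) * Real.exp (-(k * a)))
          + Real.exp (-(k * a)) ^ 2) * Real.exp ((-k) * y) ^ 2 by ring]
    rw [exp_sq', exp_sq', exp_sq', ← Real.exp_add]
    rw [show 2 * (k * a) = 2 * k * a by ring, show 2 * -(k * a) = -(2 * k * a) by ring,
      show k * a + -(k * a) = 0 by ring, show 2 * ((-k) * y) = -(2 * k * y) by ring,
      Real.exp_zero, ← hE_def, ← hEp_def]
    ring
  -- a.e. avoid the point a
  have h_ne : ∀ᵐ y : ℝ, y ≠ a := by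
    have h0 : (volume : Measure ℝ) {a} = 0 := measure_singleton a
    rw [ae_iff]
    convert h0 using 2
    ext y
    simp [not_ne_iff]
  have h2k : (0:ℝ) < 2 * k := by positivity
  -- integrability
  have hint_right : IntegrableOn (fun y => (deriv ψ y) ^ 2) (Ioi a) := by
    apply ((integrableOn_exp_Ioi' h2k a).const_mul ((N * k) ^ 2 * (Ep + 2 + E))).congr
    exact (ae_restrict_mem measurableSet_Ioi).mono fun y hy => ((hsq_right y hy).symm)
  have hint_mid : IntegrableOn (fun y => (deriv ψ y) ^ 2) (Ioc 0 a) := by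
    have hc : Continuous fun y : ℝ =>
        (N * k) ^ 2 * E * (Real.exp (2 * k * y) + Real.exp (-(2 * k * y)) - 2) := by fun_prop
    apply (hc.integrableOn_Ioc).congr
    filter_upwards [ae_restrict_mem measurableSet_Ioc, ae_restrict_of_ae h_ne] with y hy hne
    exact (hsq_mid y ⟨by linarith [hy.1, ha], lt_of_le_of_ne hy.2 hne⟩).symm
  -- integral over Ioi a
  have hIright : ∫ y in Ioi a, (deriv ψ y) ^ 2
      = (N * k) ^ 2 * (Ep + 2 + E) * (E / (2 * k)) := by
    rw [setIntegral_congr_fun measurableSet_Ioi (fun y hy => hsq_right y hy)]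
    rw [MeasureTheory.integral_const_mul, integral_exp_Ioi' h2k a, ← hE_def]
  -- integral over Ioc 0 a
  have hImid : ∫ y in Ioc 0 a, (deriv ψ y) ^ 2
      = (N * k) ^ 2 * E * ((Ep - E) / (2 * k) - 2 * a) := by
    rw [← intervalIntegral.integral_of_le ha]
    have hae : ∀ᵐ y : ℝ, y ∈ Set.uIoc (0:ℝ) a → (deriv ψ y) ^ 2
        = (N * k) ^ 2 * E * (Real.exp (2 * k * y) + Real.exp (-(2 * k * y)) - 2) := by
      filter_upwards [h_ne] with y hne hy
      rw [uIoc_of_le ha] at hy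
      exact hsq_mid y ⟨by linarith [hy.1, ha], lt_of_le_of_ne hy.2 hne⟩
    rw [intervalIntegral.integral_congr_ae hae, intervalIntegral.integral_const_mul,
      ftc_mid hk a, ← hE_def, ← hEp_def]
  -- splitting
  have hsplit : ∫ y in Ioi (0:ℝ), (deriv ψ y) ^ 2
      = (∫ y in Ioc 0 a, (deriv ψ y) ^ 2) + ∫ y in Ioi a, (deriv ψ y) ^ 2 := by
    rw [← Ioc_union_Ioi_eq_Ioi ha]
    exact setIntegral_union (Ioc_disjoint_Ioi le_rfl) measurableSet_Ioi hint_mid hint_right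
  -- evenness reduction
  have habs : ∫ y : ℝ, (deriv ψ y) ^ 2 = 2 * ∫ y in Ioi (0:ℝ), (deriv ψ y) ^ 2 := by
    rw [← integral_comp_abs (f := fun y => (deriv ψ y) ^ 2)]
    congr 1
    funext y
    rcases abs_cases y with ⟨h1, _⟩ | ⟨h1, _⟩
    · rw [h1]
    · rw [h1]; exact (heven y).symm
  -- main value
  have hk2 : k ^ 2 = lam := Real.sq_sqrt hlam.le
  have hmain : ∫ y : ℝ, (deriv ψ y) ^ 2
      = lam * (1 + E - 2 * k * a * E) / (1 + E + 2 * k * a * E) := by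
    rw [habs, hsplit, hImid, hIright]
    simp only [mul_pow]
    rw [hN2, hk2]
    field_simp
    linear_combination 2 * hEEp
  have hle : lam * (1 + E - 2 * k * a * E) / (1 + E + 2 * k * a * E) ≤ lam := by
    rw [div_le_iff₀ hQpos]
    have h1 : 0 ≤ 2 * k * a * E := by positivity
    nlinarith
  rw [hkx, ← hE_def]
  exact ⟨hmain, hmain ▸ hle⟩
end

section
/- Let A and B be self-adjoint operators on a Hilbert space, both bounded below, let λ ∈ ρ(A) ∩ ρ(B) with d_A = dist(λ, σ(A)) > 0 and d_B = dist(λ, σ(B)) > 0, and suppose there exist ε, δ > 0 such that for all φ ∈ D(A), ψ ∈ D(B): |⟨φ, (B-λ)ψ⟩ - ⟨(A-λ)φ, ψ⟩| ≤ 2εδ(‖ψ‖√((‖(A-λ)φ‖ + λ₊‖φ‖)‖φ‖) + ‖φ‖√((‖(B-λ)ψ‖ + λ₊‖ψ‖)‖ψ‖)), where λ₊ = max(λ,0). Then ‖(A-λ)⁻¹ - (B-λ)⁻¹‖ ≤ 2εδ( (1/d_B)√((1/d_A)(1 + λ₊/d_A)) + (1/d_A)√((1/d_B)(1 + λ₊/d_B))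 ). -/
set_option maxHeartbeats 1000000


open scoped InnerProductSpace

lemma stmt18_sqrt_aux {d m a p : ℝ} (hd : 0 < d) (hm : 0 ≤ m) (ha : 0 ≤ a) (hp : 0 ≤ p)
    (hdp : d * p ≤ a) :
    Real.sqrt ((a + m * p) * p) ≤ a * Real.sqrt ((1 / d) * (1 + m / d)) := by
  have hpa : p ≤ a * (1 / d) := by
    rw [mul_one_div, le_div_iff₀ hd]; nlinarith
  have hr : (0:ℝ) ≤ 1 / d := by positivity
  have h1 : (a + m * p) * p ≤ a ^ 2 * ((1 / d) * (1 + m / d)) := by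
    have hmd : m / d = m * (1 / d) := by ring
    rw [hmd]
    nlinarith [mul_le_mul hpa hpa hp (mul_nonneg ha hr), mul_le_mul_of_nonneg_left hpa ha,
      mul_le_mul_of_nonneg_left (mul_le_mul hpa hpa hp (mul_nonneg ha hr)) hm]
  calc Real.sqrt ((a + m * p) * p) ≤ Real.sqrt (a ^ 2 * ((1 / d) * (1 + m / d))) :=
        Real.sqrt_le_sqrt h1
    _ = a * Real.sqrt ((1 / d) * (1 + m / d)) := by
        rw [Real.sqrt_mul (sq_nonneg a), Real.sqrt_sq ha]

/-- Resolvent-difference bound: if `A, B` are bounded-below self-adjoint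
operators, `λ` is in both resolvent sets with `dist(λ,σ(A)) ≥ d_A > 0`,
`dist(λ,σ(B)) ≥ d_B > 0` (expressed via the lower bounds `‖(A-λ)φ‖ ≥ d_A‖φ‖`
and the existence of bounded everywhere-defined resolvents `R_A, R_B`), and the
form-comparison estimate
`|⟨φ,(B-λ)ψ⟩ - ⟨(A-λ)φ,ψ⟩| ≤ 2εδ(‖ψ‖√((‖(A-λ)φ‖+λ₊‖φ‖)‖φ‖) + ‖φ‖√((‖(B-λ)ψ‖+λ₊‖ψ‖)‖ψ‖))`
holds, then
`‖(A-λ)⁻¹ - (B-λ)⁻¹‖ ≤ 2εδ((1/d_B)√((1/d_A)(1+λ₊/d_A)) + (1/d_A)√((1/d_B)(1+λ₊/d_B)))`. -/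
theorem stmt_18 {H : Type*} [NormedAddCommGroup H] [InnerProductSpace ℂ H]
    [CompleteSpace H] (A B : H →ₗ.[ℂ] H)
    (hsaA : IsSelfAdjoint A) (hsaB : IsSelfAdjoint B)
    (hAbd : ∃ m : ℝ, ∀ φ : A.domain, m * ‖(φ : H)‖ ^ 2 ≤ (⟪(φ : H), A φ⟫_ℂ).re)
    (hBbd : ∃ m : ℝ, ∀ ψ : B.domain, m * ‖(ψ : H)‖ ^ 2 ≤ (⟪(ψ : H), B ψ⟫_ℂ).re)
    (lam dA dB ε δ : ℝ)
    (hdA : 0 < dA) (hdB : 0 < dB) (hε : 0 < ε) (hδ : 0 < δ)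
    (RA RB : H →L[ℂ] H)
    (hRA : ∀ χ : H, ∃ h : RA χ ∈ A.domain, A ⟨RA χ, h⟩ - lam • RA χ = χ)
    (hRB : ∀ χ : H, ∃ h : RB χ ∈ B.domain, B ⟨RB χ, h⟩ - lam • RB χ = χ)
    (hdistA : ∀ φ : A.domain, dA * ‖(φ : H)‖ ≤ ‖A φ - lam • (φ : H)‖)
    (hdistB : ∀ ψ : B.domain, dB * ‖(ψ : H)‖ ≤ ‖B ψ - lam • (ψ : H)‖)
    (hform : ∀ (φ : A.domain) (ψ : B.domain),
      ‖⟪(φ : H), B ψ - lam • (ψ : H)⟫_ℂ - ⟪A φ - lam • (φ : H), (ψ : H)⟫_ℂ‖ ≤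
        2 * ε * δ * (‖(ψ : H)‖ *
            Real.sqrt ((‖A φ - lam • (φ : H)‖ + max lam 0 * ‖(φ : H)‖) * ‖(φ : H)‖)
          + ‖(φ : H)‖ *
            Real.sqrt ((‖B ψ - lam • (ψ : H)‖ + max lam 0 * ‖(ψ : H)‖) * ‖(ψ : H)‖))) :
    ‖RA - RB‖ ≤ 2 * ε * δ *
      ((1 / dB) * Real.sqrt ((1 / dA) * (1 + max lam 0 / dA))
        + (1 / dA) * Real.sqrt ((1 / dB) * (1 + max lam 0 / dB))) := by

  have hmp0 : (0:ℝ) ≤ max lam 0 := le_max_right _ _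
  set C : ℝ := 2 * ε * δ *
      ((1 / dB) * Real.sqrt ((1 / dA) * (1 + max lam 0 / dA))
        + (1 / dA) * Real.sqrt ((1 / dB) * (1 + max lam 0 / dB))) with hC
  have hC0 : 0 ≤ C := by positivity
  have hfa : A.IsFormalAdjoint A := by
    have h := LinearPMap.adjoint_isFormalAdjoint (hT := hsaA.dense_domain)
    rwa [LinearPMap.isSelfAdjoint_def.mp hsaA] at h
  have key : ∀ χ' χ : H, ‖⟪χ', RA χ - RB χ⟫_ℂ‖ ≤ C * (‖χ'‖ * ‖χ‖) := by
    intro χ' χ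
    obtain ⟨hφm, hφ⟩ := hRA χ'
    obtain ⟨hψm, hψ⟩ := hRB χ
    obtain ⟨hφ2m, hφ2⟩ := hRA χ
    set φ : A.domain := ⟨RA χ', hφm⟩ with hφdef
    set ψ : B.domain := ⟨RB χ, hψm⟩ with hψdef
    set φ2 : A.domain := ⟨RA χ, hφ2m⟩ with hφ2def
    have hAφ : A φ - lam • (φ : H) = χ' := hφ
    have hBψ : B ψ - lam • (ψ : H) = χ := hψ
    have hAφ2 : A φ2 - lam • (φ2 : H) = χ := hφ2
    have hsymRA : ⟪((φ : H)), χ⟫_ℂ = ⟪χ', ((φ2 : H))⟫_ℂ := by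
      calc ⟪((φ : H)), χ⟫_ℂ = ⟪(φ:H), A φ2 - lam • (φ2:H)⟫_ℂ := by rw [hAφ2]
        _ = ⟪(φ:H), (A φ2 : H)⟫_ℂ - (lam:ℂ) * ⟪(φ:H), (φ2:H)⟫_ℂ := by
            rw [inner_sub_right, ← Complex.coe_smul, inner_smul_right]
        _ = ⟪(A φ : H), (φ2:H)⟫_ℂ - (lam:ℂ) * ⟪(φ:H), (φ2:H)⟫_ℂ := by rw [hfa φ φ2]
        _ = ⟪A φ - lam • (φ:H), (φ2:H)⟫_ℂ := by
            rw [inner_sub_left, ← Complex.coe_smul, inner_smul_left, Complex.conj_ofReal]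
        _ = ⟪χ', ((φ2 : H))⟫_ℂ := by rw [hAφ]
    have hid : ⟪χ', RA χ - RB χ⟫_ℂ
        = ⟪(φ:H), B ψ - lam • (ψ:H)⟫_ℂ - ⟪A φ - lam • (φ:H), (ψ:H)⟫_ℂ := by
      rw [hBψ, hAφ, inner_sub_right]
      rw [show ((φ2 : H)) = RA χ from rfl] at hsymRA
      rw [show ((ψ : H)) = RB χ from rfl, ← hsymRA]
    have hb := hform φ ψ
    rw [← hid, hAφ, hBψ] at hb
    have hpA : dA * ‖(φ:H)‖ ≤ ‖χ'‖ := by have h := hdistA φ; rwa [hAφ] at h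
    have hpB : dB * ‖(ψ:H)‖ ≤ ‖χ‖ := by have h := hdistB ψ; rwa [hBψ] at h
    have hpφ : ‖(φ:H)‖ ≤ ‖χ'‖ * (1/dA) := by
      rw [mul_one_div, le_div_iff₀ hdA]; nlinarith
    have hqψ : ‖(ψ:H)‖ ≤ ‖χ‖ * (1/dB) := by
      rw [mul_one_div, le_div_iff₀ hdB]; nlinarith
    have s1 : Real.sqrt ((‖χ'‖ + max lam 0 * ‖(φ:H)‖) * ‖(φ:H)‖)
        ≤ ‖χ'‖ * Real.sqrt ((1/dA) * (1 + max lam 0/dA)) :=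
      stmt18_sqrt_aux hdA hmp0 (norm_nonneg _) (norm_nonneg _) hpA
    have s2 : Real.sqrt ((‖χ‖ + max lam 0 * ‖(ψ:H)‖) * ‖(ψ:H)‖)
        ≤ ‖χ‖ * Real.sqrt ((1/dB) * (1 + max lam 0/dB)) :=
      stmt18_sqrt_aux hdB hmp0 (norm_nonneg _) (norm_nonneg _) hpB
    have t1 : ‖(ψ:H)‖ * Real.sqrt ((‖χ'‖ + max lam 0 * ‖(φ:H)‖) * ‖(φ:H)‖)
        ≤ (1/dB) * Real.sqrt ((1/dA) * (1 + max lam 0/dA)) * (‖χ'‖ * ‖χ‖) := by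
      have := mul_le_mul hqψ s1 (Real.sqrt_nonneg _) (by positivity)
      calc ‖(ψ:H)‖ * Real.sqrt ((‖χ'‖ + max lam 0 * ‖(φ:H)‖) * ‖(φ:H)‖)
          ≤ (‖χ‖ * (1/dB)) * (‖χ'‖ * Real.sqrt ((1/dA) * (1 + max lam 0/dA))) := this
        _ = (1/dB) * Real.sqrt ((1/dA) * (1 + max lam 0/dA)) * (‖χ'‖ * ‖χ‖) := by ring
    have t2 : ‖(φ:H)‖ * Real.sqrt ((‖χ‖ + max lam 0 * ‖(ψ:H)‖) * ‖(ψ:H)‖)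
        ≤ (1/dA) * Real.sqrt ((1/dB) * (1 + max lam 0/dB)) * (‖χ'‖ * ‖χ‖) := by
      have := mul_le_mul hpφ s2 (Real.sqrt_nonneg _) (by positivity)
      calc ‖(φ:H)‖ * Real.sqrt ((‖χ‖ + max lam 0 * ‖(ψ:H)‖) * ‖(ψ:H)‖)
          ≤ (‖χ'‖ * (1/dA)) * (‖χ‖ * Real.sqrt ((1/dB) * (1 + max lam 0/dB))) := this
        _ = (1/dA) * Real.sqrt ((1/dB) * (1 + max lam 0/dB)) * (‖χ'‖ * ‖χ‖) := by ring
    have h2ed : (0:ℝ) ≤ 2 * ε * δ := by positivity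
    calc ‖⟪χ', RA χ - RB χ⟫_ℂ‖ ≤ _ := hb
      _ ≤ 2 * ε * δ *
          (((1/dB) * Real.sqrt ((1/dA) * (1 + max lam 0/dA))
            + (1/dA) * Real.sqrt ((1/dB) * (1 + max lam 0/dB))) * (‖χ'‖ * ‖χ‖)) := by
          apply mul_le_mul_of_nonneg_left _ h2ed
          linarith
      _ = C * (‖χ'‖ * ‖χ‖) := by rw [hC]; ring
  have step : ∀ χ : H, ‖(RA - RB) χ‖ ≤ C * ‖χ‖ := by
    intro χ
    have h := key ((RA - RB) χ) χ
    rw [show RA χ - RB χ = (RA - RB) χ from (ContinuousLinearMap.sub_apply RA RB χ).symm] at h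
    have hx : ‖⟪(RA - RB) χ, (RA - RB) χ⟫_ℂ‖ = ‖(RA - RB) χ‖ ^ 2 := by
      rw [inner_self_eq_norm_sq_to_K]
      simp [sq_abs]
    rw [hx] at h
    rcases eq_or_ne ‖(RA - RB) χ‖ 0 with h0 | h0
    · rw [h0]; positivity
    · have hpos : 0 < ‖(RA - RB) χ‖ := lt_of_le_of_ne (norm_nonneg _) (Ne.symm h0)
      nlinarith
  exact ContinuousLinearMap.opNorm_le_bound _ hC0 step
end
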